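/- If G is a wheel-free graph that contains a diamond as an induced subgraph, then G has a clique cutset. -/

import Mathlib

open SimpleGraph

universe u

variable {V : Type u}

/-- A hole: a chordless cycle of length at least 4. -/
def IsHole (G : SimpleGraph V) {v : V} (c : G.Walk v v) : Prop :=
  c.IsCycle ∧ 4 ≤ c.length ∧
    ∀ x ∈ c.support, ∀ y ∈ c.support, G.Adj x y → s(x, y) ∈ c.edges

/-- There is a hole of `G` passing through both `u` and `v`. -/
def HasHoleThrough (G : SimpleGraph V) (u v : V) : Prop :=
  ∃ (w : V) (c : G.Walk w w), IsHole G c ∧ u ∈ c.support ∧ v ∈ c.support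

/-- `G` contains a theta as an induced subgraph: three internally vertex-disjoint
paths of length at least 2 between two distinct vertices, with no further edges
among the vertices of the three paths. -/
def ContainsTheta (G : SimpleGraph V) : Prop :=
  ∃ (a b : V) (P₁ P₂ P₃ : G.Walk a b),
    a ≠ b ∧ P₁.IsPath ∧ P₂.IsPath ∧ P₃.IsPath ∧
    2 ≤ P₁.length ∧ 2 ≤ P₂.length ∧ 2 ≤ P₃.length ∧
    (∀ x ∈ P₁.support, x ∈ P₂.support → x = a ∨ x = b) ∧
    (∀ x ∈ P₁.support, x ∈ P₃.support → x = a ∨ x = b) ∧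
    (∀ x ∈ P₂.support, x ∈ P₃.support → x = a ∨ x = b) ∧
    (∀ x y : V, (x ∈ P₁.support ∨ x ∈ P₂.support ∨ x ∈ P₃.support) →
      (y ∈ P₁.support ∨ y ∈ P₂.support ∨ y ∈ P₃.support) → G.Adj x y →
      s(x, y) ∈ P₁.edges ∨ s(x, y) ∈ P₂.edges ∨ s(x, y) ∈ P₃.edges)

/-- `G` contains a wheel as an induced subgraph: a hole together with a vertex
having at least 3 neighbors on the hole. -/
def ContainsWheel (G : SimpleGraph V) : Prop :=
  ∃ (w : V) (c : G.Walk w w) (x y₁ y₂ y₃ : V),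
    IsHole G c ∧ x ∉ c.support ∧
    y₁ ∈ c.support ∧ y₂ ∈ c.support ∧ y₃ ∈ c.support ∧
    y₁ ≠ y₂ ∧ y₁ ≠ y₃ ∧ y₂ ≠ y₃ ∧ G.Adj x y₁ ∧ G.Adj x y₂ ∧ G.Adj x y₃

/-- `G` contains a diamond (K₄ minus an edge) as an induced subgraph. -/
def ContainsDiamond (G : SimpleGraph V) : Prop :=
  ∃ a b c d : V, a ≠ b ∧ a ≠ c ∧ a ≠ d ∧ b ≠ c ∧ b ≠ d ∧ c ≠ d ∧
    ¬ G.Adj a b ∧ G.Adj a c ∧ G.Adj a d ∧ G.Adj b c ∧ G.Adj b d ∧ G.Adj c d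

/-- `G` contains a claw (K_{1,3}) as an induced subgraph. -/
def ContainsClaw (G : SimpleGraph V) : Prop :=
  ∃ u v₁ v₂ v₃ : V, v₁ ≠ v₂ ∧ v₁ ≠ v₃ ∧ v₂ ≠ v₃ ∧
    G.Adj u v₁ ∧ G.Adj u v₂ ∧ G.Adj u v₃ ∧
    ¬ G.Adj v₁ v₂ ∧ ¬ G.Adj v₁ v₃ ∧ ¬ G.Adj v₂ v₃

/-- `(A, K, B)` is a split witnessing that `K` is a cutset of `G`:
`A` and `B` are nonempty, the three sets partition the vertex set,
and there are no edges between `A` and `B`. -/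
def IsCutsetSplit (G : SimpleGraph V) (A K B : Set V) : Prop :=
  A.Nonempty ∧ B.Nonempty ∧ Disjoint A K ∧ Disjoint A B ∧ Disjoint K B ∧
    A ∪ K ∪ B = Set.univ ∧ ∀ a ∈ A, ∀ b ∈ B, ¬ G.Adj a b

/-- `G` has a clique cutset. -/
def HasCliqueCutset (G : SimpleGraph V) : Prop :=
  ∃ K A B : Set V, G.IsClique K ∧ IsCutsetSplit G A K B

/-- Some clique cutset of `G` separates `u` and `v`. -/
def CliqueCutsetSeparates (G : SimpleGraph V) (u v : V) : Prop :=
  ∃ K A B : Set V, G.IsClique K ∧ IsCutsetSplit G A K B ∧ u ∈ A ∧ v ∈ B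

/-- `G` has a star cutset: a nonempty cutset containing a vertex adjacent to
all other vertices of the cutset. -/
def HasStarCutset (G : SimpleGraph V) : Prop :=
  ∃ S A B : Set V, S.Nonempty ∧ IsCutsetSplit G A S B ∧
    ∃ x ∈ S, ∀ y ∈ S, y ≠ x → G.Adj x y

/-- `u` and `v` are joined by a walk all of whose vertices lie in `X`. -/
def ReachableWithin (G : SimpleGraph V) (X : Set V) (u v : V) : Prop :=
  ∃ p : G.Walk u v, ∀ x ∈ p.support, x ∈ X

/-- `C` is a connected component of the subgraph of `G` induced by `X`. -/
def IsCompOf (G : SimpleGraph V) (X C : Set V) : Prop :=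
  C.Nonempty ∧ C ⊆ X ∧ (∀ u ∈ C, ∀ v ∈ C, ReachableWithin G X u v) ∧
    ∀ u ∈ C, ∀ v ∈ X, G.Adj u v → v ∈ C

/-- The subgraph of `G` induced by `A` is a disjoint union of cliques. -/
def UnionOfCliques (G : SimpleGraph V) (A : Set V) : Prop :=
  ∀ x ∈ A, ∀ y ∈ A, ∀ z ∈ A, G.Adj x y → G.Adj y z → x ≠ z → G.Adj x z

/-- `(X₁, X₂, A₁, A₂, B₁, B₂)` is a split of an almost 2-join of `G`. -/
def AlmostTwoJoinSplit (G : SimpleGraph V) (X₁ X₂ A₁ A₂ B₁ B₂ : Set V) : Prop :=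
  Disjoint X₁ X₂ ∧ X₁ ∪ X₂ = Set.univ ∧ 3 ≤ X₁.ncard ∧ 3 ≤ X₂.ncard ∧
  A₁.Nonempty ∧ B₁.Nonempty ∧ A₂.Nonempty ∧ B₂.Nonempty ∧
  A₁ ⊆ X₁ ∧ B₁ ⊆ X₁ ∧ A₂ ⊆ X₂ ∧ B₂ ⊆ X₂ ∧
  Disjoint A₁ B₁ ∧ Disjoint A₂ B₂ ∧
  (∀ a ∈ A₁, ∀ b ∈ A₂, G.Adj a b) ∧
  (∀ a ∈ B₁, ∀ b ∈ B₂, G.Adj a b) ∧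
  (∀ x ∈ X₁, ∀ y ∈ X₂, G.Adj x y → (x ∈ A₁ ∧ y ∈ A₂) ∨ (x ∈ B₁ ∧ y ∈ B₂))

/-- The subgraph of `G` induced by `X` is a chordless path. -/
def InducesPath (G : SimpleGraph V) (X : Set V) : Prop :=
  ∃ (u v : V) (p : G.Walk u v), p.IsPath ∧ (∀ x : V, x ∈ p.support ↔ x ∈ X) ∧
    ∀ x ∈ X, ∀ y ∈ X, G.Adj x y → s(x, y) ∈ p.edges

/-- `(X₁, X₂, A₁, A₂, B₁, B₂)` is a split of a 2-join of `G`. -/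
def TwoJoinSplit (G : SimpleGraph V) (X₁ X₂ A₁ A₂ B₁ B₂ : Set V) : Prop :=
  AlmostTwoJoinSplit G X₁ X₂ A₁ A₂ B₁ B₂ ∧
  (∃ a ∈ A₁, ∃ b ∈ B₁, ReachableWithin G X₁ a b) ∧
  (∃ a ∈ A₂, ∃ b ∈ B₂, ReachableWithin G X₂ a b) ∧
  (A₁.ncard = 1 → B₁.ncard = 1 → ¬ InducesPath G X₁) ∧
  (A₂.ncard = 1 → B₂.ncard = 1 → ¬ InducesPath G X₂)

/-- `(X₁, X₂, A₁, A₂, B₁, B₂)` is a split of a minimally-sided 2-join of `G`,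
with `X₁` a minimal side. -/
def MinimallySidedTwoJoin (G : SimpleGraph V) (X₁ X₂ A₁ A₂ B₁ B₂ : Set V) : Prop :=
  TwoJoinSplit G X₁ X₂ A₁ A₂ B₁ B₂ ∧
  ∀ Y₁ Y₂ C₁ C₂ D₁ D₂ : Set V, TwoJoinSplit G Y₁ Y₂ C₁ C₂ D₁ D₂ →
    ¬ Y₁ ⊂ X₁ ∧ ¬ Y₂ ⊂ X₁

/-- Conditions (i)–(iii) and (vi)–(viii) of consistency of an almost 2-join,
for the side `X` with special sets `A` and `B`. -/
def ConsistentSide (G : SimpleGraph V) (X A B : Set V) : Prop :=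
  (∀ C : Set V, IsCompOf G X C → (C ∩ A).Nonempty ∧ (C ∩ B).Nonempty) ∧
  (∀ a ∈ A, ∃ b ∈ B, ¬ G.Adj a b) ∧
  (∀ b ∈ B, ∃ a ∈ A, ¬ G.Adj b a) ∧
  (∀ u ∈ X, ∀ v ∈ X, ReachableWithin G X u v) ∧
  (∀ v ∈ X, ∃ b ∈ B, ∃ p : G.Walk v b, p.IsPath ∧ (∀ x ∈ p.support, x ∈ X) ∧
    ∀ x ∈ p.support, x ∈ A → x = v ∨ x = b) ∧
  (∀ v ∈ X, ∃ a ∈ A, ∃ p : G.Walk v a, p.IsPath ∧ (∀ x ∈ p.support, x ∈ X) ∧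
    ∀ x ∈ p.support, x ∈ B → x = v ∨ x = a)

/-- The block of decomposition of `G` with respect to a 2-join, keeping the side `X`
(with special sets `A`, `B`) and replacing the other side by a marker path of
length `k` whose endpoint `0` is complete to `A` and endpoint `k` is complete to `B`. -/
def TwoJoinBlock (G : SimpleGraph V) (X A B : Set V) (k : ℕ) :
    SimpleGraph (↥X ⊕ Fin (k + 1)) where
  Adj x y :=
    match x, y with
    | Sum.inl a, Sum.inl b => G.Adj ↑a ↑b
    | Sum.inl a, Sum.inr i => ((a : V) ∈ A ∧ i = 0) ∨ ((a : V) ∈ B ∧ i = Fin.last k)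
    | Sum.inr i, Sum.inl a => ((a : V) ∈ A ∧ i = 0) ∨ ((a : V) ∈ B ∧ i = Fin.last k)
    | Sum.inr i, Sum.inr j => (i : ℕ) + 1 = (j : ℕ) ∨ (j : ℕ) + 1 = (i : ℕ)
  symm := ⟨by
    rintro (a | i) (b | j) h
    · exact h.symm
    · exact h
    · exact h
    · exact Or.symm h⟩
  loopless := ⟨by
    rintro (a | i) h
    · exact G.irrefl h
    · rcases h with h | h <;> omega⟩

/-- A graph is chordless if no cycle in it has a chord. -/
def ChordlessGraph (G : SimpleGraph V) : Prop :=
  ∀ (u : V) (c : G.Walk u u), c.IsCycle →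
    ∀ x ∈ c.support, ∀ y ∈ c.support, G.Adj x y → s(x, y) ∈ c.edges

/-- The subgraph of `G` induced by `S` has a clique cutset. -/
def HasCliqueCutsetOn (G : SimpleGraph V) (S : Set V) : Prop :=
  ∃ K A B : Set V, G.IsClique K ∧ A.Nonempty ∧ B.Nonempty ∧ Disjoint A K ∧
    Disjoint A B ∧ Disjoint K B ∧ A ∪ K ∪ B = S ∧ ∀ a ∈ A, ∀ b ∈ B, ¬ G.Adj a b

/-- The total weight of a set of vertices. -/
noncomputable def wsum [Fintype V] (w : V → ℕ) (A : Set V) : ℕ :=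
  ∑ v ∈ A.toFinite.toFinset, w v

/-!
Let `a`, `b` be the non-adjacent vertices of a diamond and `K` their common neighbourhood.
Two non-adjacent vertices of `K` would form a 4-hole with `a` and `b`, for which the edge of
the diamond inside `K` provides a hub; so `K` is a clique. If `K` does not separate `a` from
`b`, take a chordless `a`–`b` path `a a₁ a₂ ⋯ b` avoiding `K`. For adjacent `z`, `w ∈ K`, the one
whose first neighbour along the path comes first is a hub with three neighbours on the hole
closed by the other one, unless both are adjacent to `a₁`. Hence `K` is complete to `a₁`, and
likewise to `a₂`, so the non-adjacent pair `a`, `a₂` has the strictly larger common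
neighbourhood `K ∪ {a₁}`. Since common neighbourhoods cannot grow forever, some pair is
separated by its common neighbourhood, a clique cutset.
-/

namespace SimpleGraph.Walk

variable {G : SimpleGraph V}

theorem exists_eq_append_first {P : V → Prop} {a b : V} (q : G.Walk a b) (hb : P b) :
    ∃ (e : V) (R : G.Walk a e) (S : G.Walk e b),
      q = R.append S ∧ P e ∧ ∀ x ∈ R.support, P x → x = e := by
  induction q with
  | nil => exact ⟨_, nil, nil, rfl, hb, by simp⟩
  | @cons u v w h q ih =>
    by_cases hu : P u
    · exact ⟨u, nil, cons h q, rfl, hu, by simp⟩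
    · obtain ⟨e, R, S, rfl, he, hR⟩ := ih hb
      refine ⟨e, cons h R, S, rfl, he, ?_⟩
      simp only [support_cons, List.mem_cons, forall_eq_or_imp]
      exact ⟨fun h => absurd h hu, hR⟩

theorem IsChordless.of_append_left {a b c : V} {p : G.Walk a b} {q : G.Walk b c}
    (hpq : (p.append q).IsPath) (h : (p.append q).IsChordless) : p.IsChordless := by
  rw [isChordless_iff_forall_mem_edges] at h ⊢
  intro x y hx hy hxy
  have hxy' := h (p.support_subset_support_append_left q hx)
    (p.support_subset_support_append_left q hy) hxy
  rw [edges_append, List.mem_append] at hxy'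
  refine hxy'.resolve_right fun he => hxy.ne ?_
  have hxb : x = b := by_contra fun hne =>
    hpq.ne_of_mem_support_of_append hne hx (q.fst_mem_support_of_mem_edges he) rfl
  have hyb : y = b := by_contra fun hne =>
    hpq.ne_of_mem_support_of_append hne hy (q.snd_mem_support_of_mem_edges he) rfl
  rw [hxb, hyb]

theorem IsChordless.of_cons {u v w : V} {h : G.Adj u v} {q : G.Walk v w}
    (hp : (cons h q).IsPath) (hpc : (cons h q).IsChordless) : q.IsChordless := by
  rw [isChordless_iff_forall_mem_edges] at hpc ⊢
  intro x y hx hy hxy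
  have hu : u ∉ q.support := ((cons_isPath_iff h q).1 hp).2
  have he := hpc (List.mem_cons_of_mem _ hx) (List.mem_cons_of_mem _ hy) hxy
  rw [edges_cons, List.mem_cons, Sym2.eq_iff] at he
  rcases he with (⟨rfl, -⟩ | ⟨-, rfl⟩) | he
  · exact absurd hx hu
  · exact absurd hy hu
  · exact he

theorem IsChordless.not_adj_of_cons_cons {u v w x : V} {h₁ : G.Adj u v} {h₂ : G.Adj v w}
    {r : G.Walk w x} (hp : (cons h₁ (cons h₂ r)).IsPath)
    (hpc : (cons h₁ (cons h₂ r)).IsChordless) : ¬ G.Adj u w := by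
  intro huw
  have he := hpc.mem_edges (by simp) (by simp) huw
  simp only [cons_isPath_iff, support_cons, List.mem_cons, not_or] at hp
  simp only [edges_cons, List.mem_cons, Sym2.eq_iff] at he
  rcases he with (⟨-, rfl⟩ | ⟨rfl, -⟩) | (⟨rfl, -⟩ | ⟨-, rfl⟩) | he
  all_goals first
    | exact h₂.ne rfl
    | exact hp.2.1 rfl
    | exact hp.2.2 (r.fst_mem_support_of_mem_edges he)

/-- A shortest walk inside `X` is chordless: a chord `xy` would give the shorter walk
`a ⋯ x y ⋯ b`, so the positions of `x` and `y` on the walk differ by one. -/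
theorem isChordless_of_forall_length_le {X : Set V} {a b : V} (p : G.Walk a b)
    (hX : ∀ v ∈ p.support, v ∈ X)
    (hmin : ∀ q : G.Walk a b, (∀ v ∈ q.support, v ∈ X) → p.length ≤ q.length) :
    p.IsChordless := by
  classical
  have hle : ∀ x (hx : x ∈ p.support), p.support.idxOf x ≤ p.length := fun x hx => by
    simpa [length_takeUntil] using p.length_takeUntil_le_length hx
  have hidx : ∀ x y (hx : x ∈ p.support) (hy : y ∈ p.support), G.Adj x y →
      p.support.idxOf y ≤ p.support.idxOf x + 1 := by
    intro x y hx hy hxy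
    have hq := hmin ((p.takeUntil x hx).append (cons hxy (p.dropUntil y hy))) fun v hv => by
      rw [mem_support_append_iff, support_cons, List.mem_cons] at hv
      rcases hv with hv | hv | hv
      · exact hX v (p.support_takeUntil_subset_support hx hv)
      · exact hv ▸ hX x hx
      · exact hX v (p.support_dropUntil_subset_support hy hv)
    have hyle := hle y hy
    rw [length_append, length_cons, length_takeUntil, length_dropUntil] at hq
    omega
  rw [isChordless_iff_forall_mem_edges]
  intro x y hx hy hxy
  have hxy₁ := hidx x y hx hy hxy
  have hxy₂ := hidx y x hy hx hxy.symm
  have hgx := p.getVert_length_takeUntil hx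
  have hgy := p.getVert_length_takeUntil hy
  rw [length_takeUntil] at hgx hgy
  have hyle := hle y hy
  have hxle := hle x hx
  rw [mk_mem_edges_iff_exists]
  rcases lt_trichotomy (p.support.idxOf x) (p.support.idxOf y) with hlt | heq | hlt
  · refine ⟨p.support.idxOf x, by omega, ?_⟩
    rw [show p.support.idxOf x + 1 = p.support.idxOf y by omega, hgx, hgy]
  · exact absurd (hgx.symm.trans (heq ▸ hgy)) hxy.ne
  · refine ⟨p.support.idxOf y, by omega, ?_⟩
    rw [show p.support.idxOf y + 1 = p.support.idxOf x by omega, hgx, hgy, Sym2.eq_swap]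


end SimpleGraph.Walk

section

variable {G : SimpleGraph V}

theorem ReachableWithin.exists_isPath_isChordless {X : Set V} {a b : V}
    (h : ReachableWithin G X a b) :
    ∃ p : G.Walk a b, p.IsPath ∧ p.IsChordless ∧ ∀ v ∈ p.support, v ∈ X := by
  classical
  have hex : ∃ n, ∃ p : G.Walk a b, p.length = n ∧ ∀ v ∈ p.support, v ∈ X :=
    let ⟨p, hp⟩ := h; ⟨_, p, rfl, hp⟩
  obtain ⟨p, hlen, hp⟩ := Nat.find_spec hex
  have hmin : ∀ q : G.Walk a b, (∀ v ∈ q.support, v ∈ X) → p.bypass.length ≤ q.length :=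
    fun q hq => (p.length_bypass_le_length).trans (hlen ▸ Nat.find_min' hex ⟨q, rfl, hq⟩)
  have hbp : ∀ v ∈ p.bypass.support, v ∈ X :=
    fun v hv => hp v (p.support_bypass_subset_support hv)
  exact ⟨p.bypass, p.bypass_isPath, p.bypass.isChordless_of_forall_length_le hbp hmin, hbp⟩

theorem isHole_cons_concat {u v x : V} {T : G.Walk u v} (hT : T.IsPath)
    (hTc : T.IsChordless) (hlen : 2 ≤ T.length) (hx : x ∉ T.support)
    (hxu : G.Adj x u) (hvx : G.Adj v x) (hnbr : ∀ y ∈ T.support, G.Adj x y → y = u ∨ y = v) :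
    IsHole G (Walk.cons hxu (T.concat hvx)) := by
  have huv : u ≠ v := by
    rintro rfl
    have := Walk.length_eq_zero_iff.2 (Walk.isPath_iff_nil.1 hT)
    omega
  have hedges : (Walk.cons hxu (T.concat hvx)).edges = s(x, u) :: (T.edges ++ [s(v, x)]) := by
    simp [Walk.edges_concat]
  refine ⟨?_, by simp; omega, ?_⟩
  · rw [Walk.cons_isCycle_iff, Walk.edges_concat, List.concat_eq_append, List.mem_append,
      List.mem_singleton]
    refine ⟨hT.concat hx hvx, ?_⟩
    rintro (he | he)
    · exact hx (T.fst_mem_support_of_mem_edges he)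
    · rw [Sym2.eq_iff] at he
      rcases he with ⟨rfl, -⟩ | ⟨-, huv'⟩
      · exact hx T.end_mem_support
      · exact huv huv'
  · have hmem : ∀ y ∈ (Walk.cons hxu (T.concat hvx)).support, y = x ∨ y ∈ T.support := by
      simp only [Walk.support_cons, Walk.support_concat, List.mem_cons, List.mem_append]
      tauto
    have hxE : ∀ t ∈ T.support, G.Adj x t → s(x, t) ∈ (Walk.cons hxu (T.concat hvx)).edges := by
      intro t ht hxt
      rw [hedges]
      rcases hnbr t ht hxt with rfl | rfl
      · exact List.mem_cons_self
      · simp [Sym2.eq_swap]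
    intro y hy z hz hyz
    rcases hmem y hy with rfl | hyT <;> rcases hmem z hz with rfl | hzT
    · exact absurd hyz (G.irrefl)
    · exact hxE z hzT hyz
    · rw [Sym2.eq_swap]
      exact hxE y hyT hyz.symm
    · rw [hedges]
      exact List.mem_cons_of_mem _ (List.mem_append_left _ (hTc.mem_edges hyT hzT hyz))

theorem containsWheel_of_square {a x b y z : V}
    (hax : G.Adj a x) (hxb : G.Adj x b) (hby : G.Adj b y) (hya : G.Adj y a)
    (hab : ¬ G.Adj a b) (hxy : ¬ G.Adj x y) (hne : a ≠ b) (hxy' : x ≠ y)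
    (hza : G.Adj z a) (hzx : G.Adj z x) (hzb : G.Adj z b) (hzy : z ≠ y) :
    ContainsWheel G := by
  set T : G.Walk a b := .cons hax (.cons hxb .nil)
  have hT : T.IsPath := by simp [T, hax.ne, hxb.ne, hne]
  have hTc : T.IsChordless := by
    rw [Walk.isChordless_iff_forall_mem_edges]
    simp only [T, Walk.support_cons, Walk.support_nil, Walk.edges_cons, Walk.edges_nil,
      List.mem_cons, List.not_mem_nil, or_false]
    rintro u v (rfl | rfl | rfl) (rfl | rfl | rfl) huv <;> simp_all [Sym2.eq_swap, G.adj_comm]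
  have hnbr : ∀ t ∈ T.support, G.Adj y t → t = a ∨ t = b := by
    simp only [T, Walk.support_cons, Walk.support_nil, List.mem_cons, List.not_mem_nil, or_false]
    rintro t (rfl | rfl | rfl) hyt <;> simp_all [G.adj_comm]
  have hyT : y ∉ T.support := by
    simp [T, hya.ne, hxy'.symm, hby.ne']
  refine ⟨y, _, z, a, x, b, isHole_cons_concat hT hTc (by simp [T]) hyT hya hby hnbr,
    ?_, ?_, ?_, ?_, hax.ne, hne, hxb.ne, hza, hzx, hzb⟩ <;>
    simp [T, hzy, hza.ne, hzx.ne, hzb.ne]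

theorem isClique_commonNeighbors (hW : ¬ ContainsWheel G) {a b c d : V}
    (hab : ¬ G.Adj a b) (hne : a ≠ b) (hc : c ∈ G.commonNeighbors a b)
    (hd : d ∈ G.commonNeighbors a b) (hcd : G.Adj c d) :
    G.IsClique (G.commonNeighbors a b) := by
  simp only [mem_commonNeighbors] at hc hd
  have hnoHub : ∀ x y, G.Adj a x ∧ G.Adj b x → G.Adj a y ∧ G.Adj b y → ¬ G.Adj x y → x ≠ y →
      ∀ z, G.Adj a z ∧ G.Adj b z → z ≠ y → ¬ G.Adj z x :=
    fun x y hx hy hxy hxy' z hz hzy hzx => hW <| containsWheel_of_square hx.1 hx.2.symm hy.2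
      hy.1.symm hab hxy hne hxy' hz.1.symm hzx hz.2.symm hzy
  intro x hx y hy hxy
  by_contra hnxy
  simp only [mem_commonNeighbors] at hx hy
  have hxK := hnoHub x y hx hy hnxy hxy
  have hyK := hnoHub y x hy hx (fun h => hnxy h.symm) hxy.symm
  by_cases hcx : c = x
  · subst hcx
    exact hxK d hd (fun h => hnxy (h ▸ hcd)) hcd.symm
  by_cases hcy : c = y
  · subst hcy
    exact hyK d hd (fun h => hnxy (h ▸ hcd.symm)) hcd.symm
  by_cases hdx : d = x
  · exact hxK c hc hcy (hdx ▸ hcd)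
  by_cases hdy : d = y
  · exact hyK c hc hcx (hdy ▸ hcd)
  exact hnoHub c x hc hx (hxK c hc hcy) hcx d hd hdx hcd.symm

theorem cliqueCutsetSeparates_of_not_reachableWithin {K : Set V} {a b : V}
    (hK : G.IsClique K) (ha : a ∉ K) (hb : b ∉ K) (h : ¬ ReachableWithin G Kᶜ a b) :
    CliqueCutsetSeparates G a b := by
  set A : Set V := {x | ReachableWithin G Kᶜ a x}
  have haA : a ∈ A := ⟨.nil, by simpa using ha⟩
  have hAK : ∀ x ∈ A, x ∉ K := fun x ⟨p, hp⟩ => hp x p.end_mem_support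
  have hbB : b ∈ (A ∪ K)ᶜ := by simp [A, h, hb]
  refine ⟨K, A, (A ∪ K)ᶜ, hK, ⟨⟨a, haA⟩, ⟨b, hbB⟩, Set.disjoint_left.2 hAK, ?_, ?_, ?_, ?_⟩,
    haA, hbB⟩
  · exact Set.disjoint_left.2 fun x hx hxB => hxB (Or.inl hx)
  · exact Set.disjoint_left.2 fun x hx hxB => hxB (Or.inr hx)
  · exact Set.union_compl_self _
  · rintro x ⟨p, hp⟩ y hy hxy
    refine hy (Or.inl ⟨p.concat hxy, fun v hv => ?_⟩)
    rw [Walk.support_concat, List.mem_append, List.mem_singleton] at hv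
    rcases hv with hv | rfl
    · exact hp v hv
    · exact fun hvK => hy (Or.inr hvK)

/-- With `f` the first neighbour of `w` on `e ⋯ b`: unless `u' = e = f`, the vertex `w` closes
`u u' ⋯ f` into a hole on which `z` has the three neighbours `w`, `u`, `e`. -/
theorem adj_snd_of_adj_first (hW : ¬ ContainsWheel G) {u u' e b z w : V}
    {h : G.Adj u u'} {R : G.Walk u' e} {S : G.Walk e b}
    (hp : (Walk.cons h (R.append S)).IsPath) (hpc : (Walk.cons h (R.append S)).IsChordless)
    (hz : z ∉ (Walk.cons h (R.append S)).support) (hw : w ∉ (Walk.cons h (R.append S)).support)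
    (hzw : G.Adj z w) (hzu : G.Adj z u) (hwu : G.Adj w u) (hwb : G.Adj w b) (hze : G.Adj z e)
    (hwR : ∀ x ∈ R.support, G.Adj w x → x = e) :
    G.Adj z u' ∧ G.Adj w u' := by
  obtain ⟨f, R₂, S₂, rfl, hwf, hwR₂⟩ := S.exists_eq_append_first (P := G.Adj w) hwb
  set T : G.Walk u f := Walk.cons h (R.append R₂)
  have hsplit : Walk.cons h (R.append (R₂.append S₂)) = T.append S₂ := by
    simp [T, Walk.append_assoc]
  rw [hsplit] at hp hpc hz hw
  have hzT : z ∉ T.support := fun hzT => hz (T.support_subset_support_append_left S₂ hzT)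
  have hwT : w ∉ T.support := fun hwT => hw (T.support_subset_support_append_left S₂ hwT)
  have hRT : R.support ⊆ T.support := fun x hx => by simp [T, Walk.mem_support_append_iff, hx]
  by_cases hlen : 2 ≤ T.length
  · have hnbr : ∀ y ∈ T.support, G.Adj w y → y = u ∨ y = f := by
      intro y hy hwy
      simp only [T, Walk.support_cons, List.mem_cons, Walk.mem_support_append_iff] at hy
      rcases hy with rfl | hy | hy
      · exact Or.inl rfl
      · exact Or.inr (hwR₂ y (hwR y hy hwy ▸ R₂.start_mem_support) hwy)
      · exact Or.inr (hwR₂ y hy hwy)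
    have he : e ∈ T.support := hRT R.end_mem_support
    have hue : u ≠ e := by
      rintro rfl
      exact ((Walk.cons_isPath_iff h _).1 hp.of_append_left).2
        (R.support_subset_support_append_left R₂ R.end_mem_support)
    exact absurd ⟨w, _, z, w, u, e, isHole_cons_concat hp.of_append_left
      (hpc.of_append_left hp) hlen hwT hwu hwf.symm hnbr, by simp [hzT, hzw.ne], by simp,
      by simp, by simp [he], hwu.ne, fun hwe => hwT (hwe ▸ he), hue, hzw, hzu, hze⟩ hW
  · obtain ⟨hR, hR₂⟩ : R.length = 0 ∧ R₂.length = 0 := by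
      simp only [T, Walk.length_cons, Walk.length_append] at hlen
      omega
    obtain rfl := Walk.eq_of_length_eq_zero hR
    obtain rfl := Walk.eq_of_length_eq_zero hR₂
    exact ⟨hze, hwf⟩

theorem adj_snd_of_isChordless (hW : ¬ ContainsWheel G) {u u' b z w : V}
    {h : G.Adj u u'} {q : G.Walk u' b} (hp : (Walk.cons h q).IsPath)
    (hpc : (Walk.cons h q).IsChordless) (hz : z ∉ (Walk.cons h q).support)
    (hw : w ∉ (Walk.cons h q).support) (hzw : G.Adj z w) (hzu : G.Adj z u) (hwu : G.Adj w u)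
    (hzb : G.Adj z b) (hwb : G.Adj w b) :
    G.Adj z u' ∧ G.Adj w u' := by
  obtain ⟨e, R, S, rfl, he, hR⟩ :=
    q.exists_eq_append_first (P := fun x => G.Adj z x ∨ G.Adj w x) (Or.inl hzb)
  rcases he with hze | hwe
  · exact adj_snd_of_adj_first hW hp hpc hz hw hzw hzu hwu hwb hze
      fun x hx hwx => hR x hx (Or.inr hwx)
  · exact (adj_snd_of_adj_first hW hp hpc hw hz hzw.symm hwu hzu hzb hwe
      fun x hx hzx => hR x hx (Or.inl hzx)).symm

theorem subset_neighborSet_snd (hW : ¬ ContainsWheel G) {u u' b : V}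
    {h : G.Adj u u'} {q : G.Walk u' b} (hp : (Walk.cons h q).IsPath)
    (hpc : (Walk.cons h q).IsChordless) {K : Set V} (hK : G.IsClique K)
    (hKnb : K ⊆ G.commonNeighbors u b) (hKp : ∀ z ∈ K, z ∉ (Walk.cons h q).support)
    {c d : V} (hc : c ∈ K) (hd : d ∈ K) (hcd : c ≠ d) :
    K ⊆ G.neighborSet u' := by
  intro z hz
  obtain ⟨w, hw, hzw⟩ : ∃ w ∈ K, G.Adj z w := by
    by_cases hzc : z = c
    · exact ⟨d, hd, hK hz hd (hzc ▸ hcd)⟩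
    · exact ⟨c, hc, hK hz hc hzc⟩
  exact (adj_snd_of_isChordless hW hp hpc (hKp z hz) (hKp w hw) hzw (hKnb hz).1.symm
    (hKnb hw).1.symm (hKnb hz).2.symm (hKnb hw).2.symm).1.symm

theorem hasCliqueCutset_of_adj_mem_commonNeighbors [Finite V] (hW : ¬ ContainsWheel G)
    {a b c d : V} (hab : ¬ G.Adj a b) (hne : a ≠ b)
    (hc : c ∈ G.commonNeighbors a b) (hd : d ∈ G.commonNeighbors a b) (hcd : G.Adj c d) :
    HasCliqueCutset G := by
  have hK := isClique_commonNeighbors hW hab hne hc hd hcd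
  by_cases hr : ReachableWithin G (G.commonNeighbors a b)ᶜ a b
  swap
  · obtain ⟨K, A, B, hK', hsplit, -⟩ := cliqueCutsetSeparates_of_not_reachableWithin hK
      (fun ha => G.irrefl ha.1) (fun hb => G.irrefl hb.2) hr
    exact ⟨K, A, B, hK', hsplit⟩
  obtain ⟨p, hp, hpc, hpK⟩ := hr.exists_isPath_isChordless
  cases p with
  | nil => exact absurd rfl hne
  | cons h₁ q =>
  cases q with
  | nil => exact absurd h₁ hab
  | cons h₂ r =>
  rename_i a₁ a₂
  have hKp : ∀ z ∈ G.commonNeighbors a b, z ∉ (Walk.cons h₁ (Walk.cons h₂ r)).support :=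
    fun z hz hzp => hpK z hzp hz
  have hK₁ := subset_neighborSet_snd hW hp hpc hK subset_rfl hKp hc hd hcd.ne
  have hK₂ := subset_neighborSet_snd hW hp.of_cons (hpc.of_cons hp) hK
    (fun z hz => ⟨hK₁ hz, hz.2⟩) (fun z hz hzq => hKp z hz (List.mem_cons_of_mem _ hzq))
    hc hd hcd.ne
  have hsub : G.commonNeighbors a b ⊆ G.commonNeighbors a a₂ := fun z hz => ⟨hz.1, hK₂ hz⟩
  have hlt := (Set.ssubset_iff_of_subset hsub).2 ⟨a₁, ⟨h₁, h₂.symm⟩, hpK a₁ (by simp)⟩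
  have hne₂ : a ≠ a₂ := fun ha => ((Walk.cons_isPath_iff _ _).1 hp).2 (by simp [ha])
  exact hasCliqueCutset_of_adj_mem_commonNeighbors hW (hpc.not_adj_of_cons_cons hp) hne₂
    (hlt.subset hc) (hlt.subset hd) hcd
termination_by (G.commonNeighbors a b)ᶜ.ncard
decreasing_by exact Set.ncard_lt_ncard (compl_lt_compl_iff_lt.2 hlt) (Set.toFinite _)

end

/-- If G is a wheel-free graph that contains a diamond as an induced subgraph,
then G has a clique cutset. -/
theorem stmt2 {V : Type u} [Fintype V] (G : SimpleGraph V)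
    (hWheel : ¬ ContainsWheel G) (hDiamond : ContainsDiamond G) :
    HasCliqueCutset G := by
  obtain ⟨a, b, c, d, hne, -, -, -, -, -, hab, hac, had, hbc, hbd, hcd⟩ := hDiamond
  exact hasCliqueCutset_of_adj_mem_commonNeighbors hWheel hab hne ⟨hac, hbc⟩ ⟨had, hbd⟩ hcd
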